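/- arXiv:2004.10984 — 3 statements merged into one kernel-verified Lean document; each statement's English description precedes it below -/
import Mathlib

section
/- Let (P_n) be a sequence of polytopes in R^k with P_{n+1} ⊆ P_n for all n, let P = ∩_n P_n, and let p be an extreme point of P. Then there exists for each n a vertex p_n of P_n such that the sequence (p_n) converges to p. -/
/-!
Fix `ε > 0`. The extreme points of `P n` at distance `≥ ε` from `p` can only accumulate, as
`n → ∞`, on a compact set `L ⊆ P \ {p}`. As `p` is extreme in `P`, it is not in the convex hull
of `L`, which is compact by Carathéodory's theorem, so a closed half-space contains a neighbourhood
of `L` but not `p`. For large `n` it contains all far extreme points of `P n`; if these were all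
the extreme points, it would contain `P n ∋ p` by Krein–Milman.
-/

open Filter Topology Set Function Metric Module

theorem Fintype.sum_extend_zero {ι κ M : Type*} [Fintype ι] [Fintype κ] [AddCommMonoid M]
    {e : ι → κ} (he : Injective e) (f : ι → M) : ∑ j, extend e f 0 j = ∑ i, f i :=
  (Fintype.sum_of_injective e he f (extend e f 0) (fun _ hj => extend_apply' _ _ _ hj)
    fun _ => (he.extend_apply _ _ _).symm).symm

section Caratheodory

variable {𝕜 E : Type*} [Field 𝕜] [LinearOrder 𝕜] [IsStrictOrderedRing 𝕜]
  [AddCommGroup E] [Module 𝕜 E] [FiniteDimensional 𝕜 E]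

theorem convexHull_eq_image_stdSimplex (s : Set E) :
    convexHull 𝕜 s =
      (fun wz : (Fin (finrank 𝕜 E + 1) → 𝕜) × (Fin (finrank 𝕜 E + 1) → E) =>
        ∑ i, wz.1 i • wz.2 i) '' (stdSimplex 𝕜 _ ×ˢ univ.pi fun _ => s) := by
  refine Subset.antisymm (fun x hx => ?_) ?_
  · obtain ⟨y, hy⟩ := convexHull_nonempty_iff.1 ⟨x, hx⟩
    obtain ⟨ι, _, z, w, hzs, hz, hw0, hw1, rfl⟩ := eq_pos_convex_span_of_mem_convexHull hx
    obtain ⟨e⟩ : Nonempty (ι ↪ Fin (finrank 𝕜 E + 1)) :=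
      Function.Embedding.nonempty_of_card_le <| by
        simpa using hz.card_le_finrank_succ.trans (Nat.succ_le_succ (Submodule.finrank_le _))
    refine ⟨(extend e w 0, extend e z fun _ => y), ⟨⟨fun j => ?_, ?_⟩, fun j _ => ?_⟩, ?_⟩
    · by_cases hj : ∃ i, e i = j
      · obtain ⟨i, rfl⟩ := hj
        simpa only [e.injective.extend_apply] using (hw0 i).le
      · simp only [extend_apply' _ _ _ hj, Pi.zero_apply, le_refl]
    · rw [Fintype.sum_extend_zero e.injective, hw1]
    · by_cases hj : ∃ i, e i = j
      · obtain ⟨i, rfl⟩ := hj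
        simpa only [e.injective.extend_apply] using hzs (mem_range_self i)
      · simpa only [extend_apply' _ _ _ hj] using hy
    · rw [← Fintype.sum_extend_zero e.injective]
      refine Fintype.sum_congr _ _ fun j => ?_
      by_cases hj : ∃ i, e i = j
      · obtain ⟨i, rfl⟩ := hj
        simp only [e.injective.extend_apply]
      · simp only [extend_apply' _ _ _ hj, Pi.zero_apply, zero_smul]
  · rintro _ ⟨⟨w, z⟩, ⟨⟨hw0, hw1⟩, hz⟩, rfl⟩
    exact (convex_convexHull 𝕜 s).sum_mem (fun i _ => hw0 i) hw1
      fun i _ => subset_convexHull 𝕜 s (hz i trivial)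

theorem IsCompact.convexHull [TopologicalSpace 𝕜] [OrderClosedTopology 𝕜] [CompactIccSpace 𝕜]
    [ContinuousAdd 𝕜] [TopologicalSpace E] [IsTopologicalAddGroup E] [ContinuousSMul 𝕜 E]
    {s : Set E} (hs : IsCompact s) : IsCompact (convexHull 𝕜 s) := by
  rw [convexHull_eq_image_stdSimplex]
  exact ((isCompact_stdSimplex 𝕜 _).prod (isCompact_univ_pi fun _ => hs)).image (by fun_prop)

end Caratheodory

theorem IsCompact.subset_of_extremePoints_subset {E : Type*} [AddCommGroup E] [Module ℝ E]
    [TopologicalSpace E] [T2Space E] [IsTopologicalAddGroup E] [ContinuousSMul ℝ E]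
    [LocallyConvexSpace ℝ E] {s U : Set E} (hs : IsCompact s) (hsc : Convex ℝ s)
    (hU : IsClosed U) (hUc : Convex ℝ U) (h : s.extremePoints ℝ ⊆ U) : s ⊆ U := by
  rw [← closure_convexHull_extremePoints hs hsc]
  exact closure_minimal (convexHull_min h hUc) hU

theorem eventually_subset_of_forall_mem_iInter_closure {X : Type*} [TopologicalSpace X]
    [T2Space X] {A : ℕ → Set X} {C U : Set X} (hC : IsCompact C) (hAC : ∀ n, A n ⊆ C)
    (hU : ∀ x ∈ ⋂ m, closure (⋃ n ≥ m, A n), U ∈ 𝓝 x) : ∀ᶠ n in atTop, A n ⊆ U := by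
  have hanti : Antitone fun m => closure (⋃ n ≥ m, A n) := fun m m' hm =>
    closure_mono (biUnion_mono (fun n hn => le_trans hm hn) fun _ _ => Subset.rfl)
  obtain ⟨m, hm⟩ := exists_subset_nhds_of_isCompact hanti.directed_ge
    (fun m => hC.of_isClosed_subset isClosed_closure
      (closure_minimal (iUnion₂_subset fun n _ => hAC n) hC.isClosed)) hU
  exact eventually_atTop.2
    ⟨m, fun n hn => (subset_biUnion_of_mem hn).trans (subset_closure.trans hm)⟩

theorem exists_seq_mem_tendsto_of_forall_eventually {α : Type*} [PseudoMetricSpace α]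
    {S : ℕ → Set α} {p : α} (hne : ∀ n, (S n).Nonempty)
    (h : ∀ ε > 0, ∀ᶠ n in atTop, ∃ x ∈ S n, dist x p < ε) :
    ∃ q : ℕ → α, (∀ n, q n ∈ S n) ∧ Tendsto q atTop (𝓝 p) := by
  have hinf : Tendsto (fun n => infDist p (S n)) atTop (𝓝 0) := by
    refine tendsto_order.2 ⟨fun a ha => .of_forall fun n => ha.trans_le infDist_nonneg,
      fun ε hε => (h ε hε).mono fun n ⟨x, hx, hxp⟩ => ?_⟩
    exact (infDist_le_dist_of_mem hx).trans_lt (dist_comm p x ▸ hxp)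
  choose q hq hqp using fun n : ℕ => (infDist_lt_iff (hne n)).1
    (lt_add_of_pos_right (infDist p (S n)) (Nat.one_div_pos_of_nat (n := n)))
  refine ⟨q, hq, tendsto_iff_dist_tendsto_zero.2 <| squeeze_zero (fun _ => dist_nonneg)
    (fun n => (dist_comm (q n) p).trans_le (hqp n).le) ?_⟩
  simpa using hinf.add tendsto_one_div_add_atTop_nhds_zero_nat

theorem eventually_exists_mem_extremePoints_dist_lt {E : Type*} [NormedAddCommGroup E]
    [NormedSpace ℝ E] [FiniteDimensional ℝ E] {P : ℕ → Set E} (hanti : Antitone P)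
    (hcomp : ∀ n, IsCompact (P n)) (hconv : ∀ n, Convex ℝ (P n)) {p : E}
    (hp : p ∈ (⋂ n, P n).extremePoints ℝ) {ε : ℝ} (hε : 0 < ε) :
    ∀ᶠ n in atTop, ∃ x ∈ (P n).extremePoints ℝ, dist x p < ε := by
  set A : ℕ → Set E := fun n => (P n).extremePoints ℝ \ ball p ε
  set L := ⋂ m, closure (⋃ n ≥ m, A n)
  have hLP : ∀ m, closure (⋃ n ≥ m, A n) ⊆ P m \ ball p ε := fun m =>
    closure_minimal (iUnion₂_subset fun n hn => sdiff_subset_sdiff_left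
      (extremePoints_subset.trans (hanti hn))) ((hcomp m).isClosed.sdiff isOpen_ball)
  have hL : L ⊆ (⋂ n, P n) \ {p} := fun x hx => by
    have hx' := fun m => hLP m (mem_iInter.1 hx m)
    exact ⟨mem_iInter.2 fun m => (hx' m).1,
      fun hxp => (hx' 0).2 (mem_ball.2 (by simpa [mem_singleton_iff.1 hxp] using hε))⟩
  have hpL : p ∉ convexHull ℝ L := fun h =>
    (convexHull_min hL ((convex_iInter hconv).mem_extremePoints_iff_convex_sdiff.1 hp).2 h).2 rfl
  have hLc : IsCompact L := (hcomp 0).of_isClosed_subset (isClosed_iInter fun _ => isClosed_closure)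
    (hL.trans (sdiff_subset.trans (iInter_subset _ 0)))
  obtain ⟨f, u, v, hfL, huv, hfp⟩ := geometric_hahn_banach_compact_closed (convex_convexHull ℝ L)
    hLc.convexHull (convex_singleton p) isClosed_singleton (disjoint_singleton_right.2 hpL)
  have hAU : ∀ᶠ n in atTop, A n ⊆ {x | f x ≤ u} :=
    eventually_subset_of_forall_mem_iInter_closure (hcomp 0)
      (fun n => sdiff_subset.trans (extremePoints_subset.trans (hanti (Nat.zero_le n))))
      fun x hx => mem_of_superset ((isOpen_lt f.continuous continuous_const).mem_nhds
        (hfL x (subset_convexHull ℝ L hx))) fun y (hy : f y < u) => hy.le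
  filter_upwards [hAU] with n hn
  by_contra! hfar
  have hPU := (hcomp n).subset_of_extremePoints_subset (hconv n)
    (isClosed_le f.continuous continuous_const) (convex_halfSpace_le f.isLinear u)
    fun x hx => hn ⟨hx, fun hxp => (hfar x hx).not_gt (mem_ball.1 hxp)⟩
  exact (hfp p rfl).not_ge (huv.le.trans' (hPU (mem_iInter.1 hp.1 n)))

/-- For a nested sequence of polytopes `P n = convexHull (V n)` in `ℝ^k`,
every extreme point `p` of the intersection `⋂ n, P n` is the limit of a sequence of
vertices (extreme points) `q n` of the polytopes `P n`. -/
theorem stmt0 (k : ℕ) (V : ℕ → Finset (Fin k → ℝ)) (P : ℕ → Set (Fin k → ℝ))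
    (hP : ∀ n, P n = convexHull ℝ (V n : Set (Fin k → ℝ)))
    (hnest : ∀ n, P (n + 1) ⊆ P n)
    (p : Fin k → ℝ) (hp : p ∈ Set.extremePoints ℝ (⋂ n, P n)) :
    ∃ q : ℕ → Fin k → ℝ,
      (∀ n, q n ∈ Set.extremePoints ℝ (P n)) ∧ Tendsto q atTop (𝓝 p) := by
  have hcomp : ∀ n, IsCompact (P n) := fun n => hP n ▸ (V n).finite_toSet.isCompact_convexHull ℝ
  have hconv : ∀ n, Convex ℝ (P n) := fun n => hP n ▸ convex_convexHull ℝ _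
  have hpP : ∀ n, p ∈ P n := mem_iInter.1 hp.1
  exact exists_seq_mem_tendsto_of_forall_eventually
    (fun n => (hcomp n).extremePoints_nonempty ⟨p, hpP n⟩) fun _ hε =>
      eventually_exists_mem_extremePoints_dist_lt (antitone_nat_of_succ_le hnest) hcomp hconv hp hε
end

section
/- If k < l < n and Q⁽ⁿ⁾ is a probability distribution on size-n worlds, then P⁽ᵏ⁾∘(P⁽ˡ⁾∘Q⁽ⁿ⁾) = P⁽ᵏ⁾∘Q⁽ⁿ⁾; consequently Δ⁽ᵏ⁾_n ⊆ Δ⁽ᵏ⁾_l. -/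
/-! Sampling an `l`-tuple of distinct elements of `[n]` and then a `k`-tuple of distinct
positions of it yields a uniformly distributed `k`-tuple of distinct elements of `[n]`:
`Perm (Fin n)` acts transitively on `k`-embeddings and permutes the fibres of the composition
map, so these fibres all have the same size. Since the subworld induced along a composite
embedding is the iterated induced subworld, `P⁽ᵏ⁾(·|ω) = Σ_ω'' P⁽ˡ⁾(ω''|ω) P⁽ᵏ⁾(·|ω'')`. -/

open Finset

abbrev World (n : ℕ) := Fin n → Fin n → Bool

def induce {n k : ℕ} (ω : World n) (i : Fin k ↪ Fin n) : World k :=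
  fun a b => ω (i a) (i b)

/-- `P⁽ᵏ⁾(ω'|ω)`: fraction of ordered `k`-tuples of distinct elements of `[n]` whose
induced relabeled subworld of `ω` equals `ω'`. -/
noncomputable def freq (k n : ℕ) (ω' : World k) (ω : World n) : ℝ :=
  (((univ : Finset (Fin k ↪ Fin n)).filter (fun i => induce ω i = ω')).card : ℝ) /
    ((univ : Finset (Fin k ↪ Fin n)).card : ℝ)

/-- Fenstad sampling `(P⁽ᵏ⁾∘Q)(ω') = Σ_ω Q(ω)·P⁽ᵏ⁾(ω'|ω)`. -/
noncomputable def fenstad (k n : ℕ) (Q : World n → ℝ) : World k → ℝ :=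
  fun ω' => ∑ ω : World n, Q ω * freq k n ω' ω

section Counting

variable {α β : Type*} [Fintype α] [Fintype β]

lemma card_filter_comp_mul_card_eq [DecidableEq β] (f : α → β)
    (hf : ∀ b₁ b₂, #{a | f a = b₁} = #{a | f a = b₂}) (p : β → Prop) [DecidablePred p] :
    #{a | p (f a)} * Fintype.card β = #{b | p b} * Fintype.card α := by
  cases isEmpty_or_nonempty β with
  | inl _ => simp
  | inr hβ =>
    obtain ⟨b₀⟩ := hβ
    have hfib (s : Finset β) : #{a | f a ∈ s} = #s * #{a | f a = b₀} := by
      rw [card_eq_sum_card_fiberwise (f := f) (t := s) fun a ha => by simpa using ha,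
        sum_congr rfl fun b hb => ?_, sum_const, smul_eq_mul]
      rw [filter_filter, ← hf b b₀]
      exact congrArg card (filter_congr fun a _ => ⟨And.right, fun h => ⟨h ▸ hb, h⟩⟩)
    have hp := hfib {b | p b}
    have huniv := hfib univ
    simp only [mem_filter, mem_univ, true_and, filter_true, card_univ] at hp huniv
    rw [hp, huniv]
    ring

lemma card_filter_prod_eq_sum {γ : Type*} [Fintype γ] [DecidableEq γ] (g : α → γ)
    (r : γ → β → Prop) [∀ c, DecidablePred (r c)] :
    #{p : α × β | r (g p.1) p.2} = ∑ c, #{a | g a = c} * #{b | r c b} := by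
  rw [card_eq_sum_card_fiberwise (f := fun p => g p.1) (t := univ) (by simp)]
  refine sum_congr rfl fun c _ => ?_
  rw [← card_product, filter_filter, ← univ_product_univ, ← filter_product]
  congr 1
  exact filter_congr fun p _ => ⟨fun ⟨h, hc⟩ => ⟨hc, hc ▸ h⟩, fun ⟨hc, h⟩ => ⟨hc ▸ h, hc⟩⟩

end Counting

namespace Function.Embedding

lemma exists_perm_trans_eq {α γ : Type*} [Finite α] (e₁ e₂ : α ↪ γ) :
    ∃ σ : Equiv.Perm γ, e₁.trans σ.toEmbedding = e₂ :=
  let ⟨σ, hσ⟩ := Equiv.Perm.exists_extending_pair e₁ e₂ e₁.injective e₂.injective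
  ⟨σ, ext hσ⟩

variable {α β γ : Type*} [Fintype α] [Fintype β] [Fintype γ] [DecidableEq γ]

lemma card_filter_trans_eq (e₁ e₂ : α ↪ γ) :
    #{p : (β ↪ γ) × (α ↪ β) | p.2.trans p.1 = e₁} =
      #{p : (β ↪ γ) × (α ↪ β) | p.2.trans p.1 = e₂} := by
  obtain ⟨σ, rfl⟩ := exists_perm_trans_eq e₁ e₂
  refine card_equiv ((Equiv.embeddingCongr (.refl β) σ).prodCongr (.refl _)) fun p => ?_
  simp only [mem_filter, mem_univ, true_and, Equiv.prodCongr_apply, Equiv.coe_refl,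
    Prod.map_fst, Prod.map_snd, id_eq, Equiv.embeddingCongr_apply]
  constructor
  · rintro rfl; rfl
  · intro h
    ext x
    simpa using DFunLike.congr_fun h x

end Function.Embedding

lemma freq_nonneg (k n : ℕ) (ω' : World k) (ω : World n) : 0 ≤ freq k n ω' ω := by
  unfold freq; positivity

lemma sum_freq {k n : ℕ} (h : k ≤ n) (ω : World n) : ∑ ω' : World k, freq k n ω' ω = 1 := by
  simp only [freq, ← sum_div, ← Nat.cast_sum]
  rw [← card_eq_sum_card_fiberwise fun _ _ => mem_univ _, div_self]
  simp [h]

lemma sum_freq_mul_freq {k l n : ℕ} (hkl : k ≤ l) (hln : l ≤ n) (ω' : World k) (ω : World n) :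
    ∑ ω'' : World l, freq l n ω'' ω * freq k l ω' ω'' = freq k n ω' ω := by
  have hpairs : #{p : (Fin l ↪ Fin n) × (Fin k ↪ Fin l) | induce ω (p.2.trans p.1) = ω'} =
      ∑ ω'' : World l, #{i | induce ω i = ω''} * #{j : Fin k ↪ Fin l | induce ω'' j = ω'} :=
    card_filter_prod_eq_sum (induce ω) fun ω'' j => induce ω'' j = ω'
  have huniform := card_filter_comp_mul_card_eq
    (fun p : (Fin l ↪ Fin n) × (Fin k ↪ Fin l) => p.2.trans p.1)
    Function.Embedding.card_filter_trans_eq (fun e => induce ω e = ω')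
  rw [hpairs, Fintype.card_prod] at huniform
  simp only [freq, card_univ, div_mul_div_comm, ← sum_div, ← Nat.cast_mul, ← Nat.cast_sum]
  rw [div_eq_div_iff (by simp [hkl, hln]) (by simp [hkl.trans hln])]
  exact_mod_cast huniform

lemma fenstad_fenstad {k l n : ℕ} (hkl : k ≤ l) (hln : l ≤ n) (Q : World n → ℝ) :
    fenstad k l (fenstad l n Q) = fenstad k n Q := by
  ext ω'
  simp only [fenstad, sum_mul, mul_assoc]
  rw [sum_comm]
  simp only [← mul_sum, sum_freq_mul_freq hkl hln]

lemma fenstad_nonneg {k n : ℕ} {Q : World n → ℝ} (hQ : ∀ ω, 0 ≤ Q ω) (ω' : World k) :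
    0 ≤ fenstad k n Q ω' :=
  sum_nonneg fun ω _ => mul_nonneg (hQ ω) (freq_nonneg _ _ _ _)

lemma sum_fenstad {k n : ℕ} (h : k ≤ n) (Q : World n → ℝ) :
    ∑ ω' : World k, fenstad k n Q ω' = ∑ ω, Q ω := by
  simp only [fenstad]
  rw [sum_comm]
  simp only [← mul_sum, sum_freq h, mul_one]

theorem stmt5_general (k l n : ℕ) (hkl : k < l) (hln : l < n)
    (Q : World n → ℝ) :
    (∀ ω' : World k, fenstad k l (fenstad l n Q) ω' = fenstad k n Q ω') ∧
    ({q : World k → ℝ | ∃ Q' : World n → ℝ,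
        (∀ ω, 0 ≤ Q' ω) ∧ (∑ ω : World n, Q' ω = 1) ∧ q = fenstad k n Q'} ⊆
      {q : World k → ℝ | ∃ Q' : World l → ℝ,
        (∀ ω, 0 ≤ Q' ω) ∧ (∑ ω : World l, Q' ω = 1) ∧ q = fenstad k l Q'}) := by
  refine ⟨fun ω' => by rw [fenstad_fenstad hkl.le hln.le], ?_⟩
  rintro _ ⟨Q', hQ'0, hQ'1, rfl⟩
  exact ⟨fenstad l n Q', fenstad_nonneg hQ'0, by rw [sum_fenstad hln.le, hQ'1],
    (fenstad_fenstad hkl.le hln.le Q').symm⟩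

/-- for `k < l < n` and any probability distribution `Q⁽ⁿ⁾` on size-`n`
worlds, `P⁽ᵏ⁾∘(P⁽ˡ⁾∘Q⁽ⁿ⁾) = P⁽ᵏ⁾∘Q⁽ⁿ⁾`; consequently `Δ⁽ᵏ⁾_n ⊆ Δ⁽ᵏ⁾_l`. -/
theorem stmt5 (k l n : ℕ) (hkl : k < l) (hln : l < n)
    (Q : World n → ℝ) (hQ0 : ∀ ω, 0 ≤ Q ω) (hQ1 : ∑ ω : World n, Q ω = 1) :
    (∀ ω' : World k, fenstad k l (fenstad l n Q) ω' = fenstad k n Q ω') ∧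
    ({q : World k → ℝ | ∃ Q' : World n → ℝ,
        (∀ ω, 0 ≤ Q' ω) ∧ (∑ ω : World n, Q' ω = 1) ∧ q = fenstad k n Q'} ⊆
      {q : World k → ℝ | ∃ Q' : World l → ℝ,
        (∀ ω, 0 ≤ Q' ω) ∧ (∑ ω : World l, Q' ω = 1) ∧ q = fenstad k l Q'}) :=
  stmt5_general k l n hkl hln Q
end

section
/- The distribution '+' on undirected 3-node graphs assigning probability 1/3 to each single-edge graph (and 0 to all other graphs) is not n-extendable for any n ≥ 5: there is no probability distribution Q⁽ⁿ⁾ on size-n undirected graphs whose expected statistical frequency distribution of induced 3-node subgraphs equals '+'. -/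
/-!
Every world `ω` in the support of `Q` contributes to the frequency of each 3-world it induces,
so all its induced 3-worlds are single-edge graphs: every triple of distinct vertices spans
exactly one edge. No graph on five vertices `a, b, x, y, z` has this property: if `ab` is an
edge, the triples `abx`, `aby`, `abz` show that `a` is joined to none of `x, y, z`; then the
triples `axy`, `axz` force the edges `xy`, `xz`, and the triple `xyz` has two edges.
-/

open Finset

/-- The undirected single-edge 3-world with edge `{a,b}`. -/
def g (a b : Fin 3) : World 3 :=
  fun i j => decide ((i = a ∧ j = b) ∨ (i = b ∧ j = a))

abbrev ExactlyOne (x y z : Bool) : Prop :=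
  [x, y, z].count true = 1

namespace ExactlyOne

variable {y z : Bool}

theorem eq_false_of_true_left (h : ExactlyOne true y z) : y = false := by
  revert h; cases y <;> cases z <;> decide

theorem eq_true_of_false_false (h : ExactlyOne false false z) : z = true := by
  revert h; cases z <;> decide

theorem not_true_true : ¬ ExactlyOne true true z := by
  cases z <;> decide

end ExactlyOne

section OneEdgePerTriple

variable {α : Type*}

def OneEdgePerTriple (r : α → α → Bool) : Prop :=
  ∀ v : Fin 3 ↪ α, ExactlyOne (r (v 0) (v 1)) (r (v 0) (v 2)) (r (v 1) (v 2))

namespace OneEdgePerTriple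

variable {r : α → α → Bool}

theorem exactlyOne {m : ℕ} (h : OneEdgePerTriple r) (v : Fin m ↪ α) (i j k : Fin m)
    (hijk : Function.Injective ![i, j, k] := by decide) :
    ExactlyOne (r (v i) (v j)) (r (v i) (v k)) (r (v j) (v k)) :=
  h ((⟨_, hijk⟩ : Fin 3 ↪ Fin m).trans v)

theorem eq_false_of_fin_five (h : OneEdgePerTriple r) (v : Fin 5 ↪ α) :
    r (v 0) (v 1) = false := by
  by_contra h01
  rw [Bool.not_eq_false] at h01
  have h02 := (h01 ▸ h.exactlyOne v 0 1 2).eq_false_of_true_left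
  have h03 := (h01 ▸ h.exactlyOne v 0 1 3).eq_false_of_true_left
  have h04 := (h01 ▸ h.exactlyOne v 0 1 4).eq_false_of_true_left
  have h23 := (h02 ▸ h03 ▸ h.exactlyOne v 0 2 3).eq_true_of_false_false
  have h24 := (h02 ▸ h04 ▸ h.exactlyOne v 0 2 4).eq_true_of_false_false
  exact (h23 ▸ h24 ▸ h.exactlyOne v 2 3 4).not_true_true

theorem card_lt_five [Fintype α] (h : OneEdgePerTriple r) : Fintype.card α < 5 := by
  by_contra! hcard
  obtain ⟨v⟩ :=
    Function.Embedding.nonempty_of_card_le (α := Fin 5) (β := α) (by simpa using hcard)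
  -- reordering `v` puts any of the pairs among `v 0, v 1, v 2` first
  have h01 : r (v 0) (v 1) = false := h.eq_false_of_fin_five v
  have h02 : r (v 0) (v 2) = false :=
    h.eq_false_of_fin_five ((⟨![0, 2, 1, 3, 4], by decide⟩ : Fin 5 ↪ Fin 5).trans v)
  have h12 : r (v 1) (v 2) = false :=
    h.eq_false_of_fin_five ((⟨![1, 2, 0, 3, 4], by decide⟩ : Fin 5 ↪ Fin 5).trans v)
  have h012 := h.exactlyOne v 0 1 2
  rw [h01, h02, h12] at h012
  exact absurd h012 (by decide)

end OneEdgePerTriple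

end OneEdgePerTriple

theorem freq_induce_pos {k n : ℕ} (ω : World n) (i : Fin k ↪ Fin n) :
    0 < freq k n (induce ω i) ω :=
  div_pos (Nat.cast_pos.mpr (card_pos.mpr ⟨i, by simp⟩))
    (Nat.cast_pos.mpr (card_pos.mpr ⟨i, mem_univ i⟩))

theorem fenstad_induce_pos {k n : ℕ} {Q : World n → ℝ} (hQ : ∀ ω, 0 ≤ Q ω) {ω : World n}
    (hω : 0 < Q ω) (i : Fin k ↪ Fin n) : 0 < fenstad k n Q (induce ω i) :=
  sum_pos' (fun ω _ => mul_nonneg (hQ ω) (by unfold freq; positivity))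
    ⟨ω, mem_univ ω, mul_pos hω (freq_induce_pos ω i)⟩

theorem exactlyOne_of_single_edge {ω' : World 3} (h : ω' = g 0 1 ∨ ω' = g 0 2 ∨ ω' = g 1 2) :
    ExactlyOne (ω' 0 1) (ω' 0 2) (ω' 1 2) := by
  rcases h with rfl | rfl | rfl <;> decide

/-- the distribution `'+'` assigning probability `1/3` to each of the
three single-edge undirected 3-worlds is not `n`-extendable for any `n ≥ 5`: no
probability distribution `Q⁽ⁿ⁾` on undirected size-`n` worlds has `'+'` as its expected
statistical frequency distribution of induced 3-worlds. -/
theorem stmt11 (n : ℕ) (hn : 5 ≤ n) :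
    ¬ ∃ Q : World n → ℝ,
        (∀ ω, 0 ≤ Q ω) ∧ (∑ ω : World n, Q ω = 1) ∧
        (∀ ω : World n, Q ω ≠ 0 → (∀ i j, ω i j = ω j i) ∧ (∀ i, ω i i = false)) ∧
        (∀ ω' : World 3, fenstad 3 n Q ω' =
          if ω' = g 0 1 ∨ ω' = g 0 2 ∨ ω' = g 1 2 then (1 : ℝ) / 3 else 0) := by
  rintro ⟨Q, hQ, hQsum, -, hfen⟩
  obtain ⟨ω, -, hω⟩ := exists_ne_zero_of_sum_ne_zero (s := univ) (f := Q) (by simp [hQsum])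
  have hone : OneEdgePerTriple ω := fun v => exactlyOne_of_single_edge <| by
    by_contra hv
    have hpos := fenstad_induce_pos hQ ((hQ ω).lt_of_ne' hω) v
    rw [hfen, if_neg hv] at hpos
    exact hpos.false
  have hlt := hone.card_lt_five
  rw [Fintype.card_fin] at hlt
  omega
end
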